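/- Let P_n be the polynomials defined by the recurrence c_{n-1} P_{n-2}(z) + b_n P_{n-1}(z) + (a_{n+1} − z) P_n(z) + P_{n+1}(z) = 0 for n ≥ 0 with P_0 = 1, P_{-1} = P_{-2} = 0, and set B_m(z) = (P_{2m}(z), P_{2m+1}(z))ᵀ. Then the B_m satisfy the vector three-term recurrence C_n B_{n-1}(z) + (B_{n+1} − z I₂) B_n(z) + A B_{n+1}(z) = 0 with B_{-1} = 0, B_0(z) = (1, z − a_1)ᵀ, where A = [[0,0],[1,0]], C_n = [[c_{2n-1}, b_{2n}],[0, c_{2n}]], B_n = [[a_{2n-1},1],[b_{2n-1}, a_{2n}]]. -/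
import Mathlib


open Polynomial Matrix

noncomputable section

/-- Auxiliary shifted sequence: `Paux (n+2) = P_n`, with `Paux 0 = P_{-2} = 0`,
`Paux 1 = P_{-1} = 0`, `Paux 2 = P_0 = 1`, and the four-term recurrence
`P_{n+1} = (z − a_{n+1}) P_n − b_n P_{n-1} − c_{n-1} P_{n-2}`. -/
def Paux (a b c : ℕ → ℂ) : ℕ → Polynomial ℂ
  | 0 => 0
  | 1 => 0
  | 2 => 1
  | n + 3 =>
      (X - C (a (n + 1))) * Paux a b c (n + 2)
        - C (b n) * Paux a b c (n + 1) - C (c (n - 1)) * Paux a b c n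

/-- The polynomials `P_n` of the recurrence. -/
def Pp (a b c : ℕ → ℂ) (n : ℕ) : Polynomial ℂ := Paux a b c (n + 2)

/-- The vector polynomials `B_m = (P_{2m}, P_{2m+1})ᵀ`. -/
def Bv (a b c : ℕ → ℂ) (m : ℕ) : Fin 2 → Polynomial ℂ :=
  ![Pp a b c (2 * m), Pp a b c (2 * m + 1)]

/-- `B_{n-1}`, with the convention `B_{-1} = 0`. -/
def Bvprev (a b c : ℕ → ℂ) : ℕ → Fin 2 → Polynomial ℂ
  | 0 => 0
  | m + 1 => Bv a b c m

/-- The block `A = [[0,0],[1,0]]`. -/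
def Amat : Matrix (Fin 2) (Fin 2) ℂ := !![0, 0; 1, 0]

/-- The block `B_n = [[a_{2n-1}, 1],[b_{2n-1}, a_{2n}]]` (used for `n ≥ 1`). -/
def Bblk (a b : ℕ → ℂ) (n : ℕ) : Matrix (Fin 2) (Fin 2) ℂ :=
  !![a (2 * n - 1), 1; b (2 * n - 1), a (2 * n)]

/-- The block `C_n = [[c_{2n-1}, b_{2n}],[0, c_{2n}]]` for `n ≥ 1`, with
`C_0 = [[1,0],[−a_1,1]]`. -/
def Cblk (a b c : ℕ → ℂ) (n : ℕ) : Matrix (Fin 2) (Fin 2) ℂ :=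
  if n = 0 then !![1, 0; -(a 1), 1]
  else !![c (2 * n - 1), b (2 * n); 0, c (2 * n)]

lemma Paux_add3 (a b c : ℕ → ℂ) (n : ℕ) :
    Paux a b c (n + 3) =
      (X - C (a (n + 1))) * Paux a b c (n + 2)
        - C (b n) * Paux a b c (n + 1) - C (c (n - 1)) * Paux a b c n := by
  rfl

lemma Pp_rec (a b c : ℕ → ℂ) (n : ℕ) :
    Pp a b c (n + 3) = (X - C (a (n + 3))) * Pp a b c (n + 2)
      - C (b (n + 2)) * Pp a b c (n + 1) - C (c (n + 1)) * Pp a b c n := by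
  show Paux a b c (n + 2 + 3) = _
  rw [Paux_add3]
  have : n + 2 - 1 = n + 1 := by omega
  rw [this]
  rfl

lemma Pp_zero (a b c : ℕ → ℂ) : Pp a b c 0 = 1 := rfl

lemma Pp_one (a b c : ℕ → ℂ) : Pp a b c 1 = X - C (a 1) := by
  show Paux a b c 3 = _
  rw [Paux_add3]
  norm_num [Paux]

lemma Pp_two (a b c : ℕ → ℂ) : Pp a b c 2 =
    (X - C (a 2)) * (X - C (a 1)) - C (b 1) := by
  show Paux a b c (1 + 3) = _
  rw [Paux_add3]
  norm_num [Paux]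

/-- The vector polynomials `B_m(z) = (P_{2m}(z), P_{2m+1}(z))ᵀ` satisfy the vector
three-term recurrence `C_n B_{n-1} + (B_{n+1} − z I₂) B_n + A B_{n+1} = 0` with
`B_{-1} = 0` and `B_0(z) = (1, z − a₁)ᵀ`. -/
theorem vector_recurrence (a b c : ℕ → ℂ) (hb0 : b 0 = 0) (hc0 : c 0 = 0) :
    Bv a b c 0 = ![1, X - C (a 1)] ∧
    ∀ n : ℕ,
      (Cblk a b c n).map C *ᵥ Bvprev a b c n
        + ((Bblk a b (n + 1)).map C - (X : Polynomial ℂ) • (1 : Matrix (Fin 2) (Fin 2) (Polynomial ℂ)))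
            *ᵥ Bv a b c n
        + Amat.map C *ᵥ Bv a b c (n + 1) = 0 := by
  constructor
  · funext i
    fin_cases i <;> simp [Bv, Pp_zero, Pp_one]
  · intro n
    funext i
    match n, i with
    | 0, 0 =>
      simp [Bv, Bvprev, Amat, Cblk, Bblk, mulVec, dotProduct, Fin.sum_univ_two,
        Pp_zero, Pp_one, Pp_two]
    | 0, 1 =>
      simp [Bv, Bvprev, Amat, Cblk, Bblk, mulVec, dotProduct, Fin.sum_univ_two,
        Pp_zero, Pp_one, Pp_two]
      ring
    | (m+1), 0 =>
      have h3 : Pp a b c (2*m + 3) = _ := Pp_rec a b c (2*m)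
      simp [Bv, Bvprev, Amat, Cblk, Bblk, mulVec, dotProduct, Fin.sum_univ_two,
        show 2*(m+1) = 2*m+2 by ring, show 2*(m+2) = 2*m+4 by ring,
        show 2*m+2-1 = 2*m+1 by omega, show 2*m+4-1 = 2*m+3 by omega, h3]
      ring
    | (m+1), 1 =>
      have h4 : Pp a b c (2*m + 4) = _ := Pp_rec a b c (2*m+1)
      simp [Bv, Bvprev, Amat, Cblk, Bblk, mulVec, dotProduct, Fin.sum_univ_two,
        show 2*(m+1) = 2*m+2 by ring, show 2*(m+2) = 2*m+4 by ring,
        show 2*m+2-1 = 2*m+1 by omega, show 2*m+4-1 = 2*m+3 by omega,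
        show 2*m+1+3 = 2*m+4 by ring, show 2*m+1+2 = 2*m+3 by ring,
        show 2*m+1+1 = 2*m+2 by ring, h4]
      ring
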